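/- In the setting of the chosen (E,M)-factorizations N_{Q,T} of the canonical morphisms c_{Q,T}: (i) for Q ⊆ Q' there is a unique morphism u_{Q⊆Q',T} : N_{Q,T} → N_{Q',T} with u_{Q⊆Q',T} ∘ e_{Q,T} = e_{Q',T} ∘ (canonical inclusion ∐_Q X → ∐_{Q'} X) and m_{Q',T} ∘ u_{Q⊆Q',T} = m_{Q,T}, and this morphism lies in M; (ii) for T ⊆ T' there is a unique morphism v_{Q,T⊆T'} : N_{Q,T'} → N_{Q,T} with v_{Q,T⊆T'} ∘ e_{Q,T'} = e_{Q,T} and m_{Q,T} ∘ v_{Q,T⊆T'} = (canonical restriction ∏_{T'} Y → ∏_T Y) ∘ m_{Q,T'}, and this morphism lies in E; (iii) these canonical morphisms compose: for Q ⊆ Q' ⊆ Q'', u_{Q'⊆Q'',T} ∘ u_{Q⊆Q',T} = u_{Q⊆Q'',T}, and for T ⊆ T' ⊆ T'', v_{Q,T⊆T'} ∘ v_{Q,T'⊆T''} = v_{Q,T⊆T''}. -/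

import Mathlib

open CategoryTheory

/-- A factorization system `(E, M)` on a category `C`. -/
structure FactSys {C : Type*} [Category C] (E M : MorphismProperty C) : Prop where
  E_iso : ∀ {X Y : C} (f : X ⟶ Y), IsIso f → E f
  M_iso : ∀ {X Y : C} (f : X ⟶ Y), IsIso f → M f
  E_comp : ∀ {X Y Z : C} (f : X ⟶ Y) (g : Y ⟶ Z), E f → E g → E (f ≫ g)
  M_comp : ∀ {X Y Z : C} (f : X ⟶ Y) (g : Y ⟶ Z), M f → M g → M (f ≫ g)
  fact : ∀ {X Y : C} (f : X ⟶ Y), ∃ (Z : C) (e : X ⟶ Z) (m : Z ⟶ Y), E e ∧ M m ∧ e ≫ m = f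
  diag : ∀ {X Y Z W : C} (e : X ⟶ Y) (m : Z ⟶ W) (u : X ⟶ Z) (v : Y ⟶ W),
    E e → M m → e ≫ v = u ≫ m → ∃! d : Y ⟶ Z, e ≫ d = u ∧ d ≫ m = v

/-- The setting of the chosen `(E,M)`-factorizations `N Q T` of the canonical morphisms
`c_{Q,T} : ∐_Q X ⟶ ∏_T Y` induced by the language `ℓ`: for every `Q` there is a copower
`P Q` of `X` over `Q` (with injections `ι`), for every `T` a power `R T` of `Y` over `T`
(with projections `π`), and for all `Q, T` a chosen factorization
`e Q T : P Q ⟶ N Q T` in `E`, `m Q T : N Q T ⟶ R T` in `M` of `c_{Q,T}`. -/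
structure Setup (A : Type) {C : Type*} [Category C] (E M : MorphismProperty C)
    (X Y : C) (ℓ : List A → (X ⟶ Y)) where
  P : Set (List A) → C
  ι : ∀ (Q : Set (List A)) (q : List A), q ∈ Q → (X ⟶ P Q)
  hP : ∀ (Q : Set (List A)) (Z : C) (f : ∀ q : List A, q ∈ Q → (X ⟶ Z)),
    ∃! g : P Q ⟶ Z, ∀ (q : List A) (hq : q ∈ Q), ι Q q hq ≫ g = f q hq
  R : Set (List A) → C
  π : ∀ (T : Set (List A)) (t : List A), t ∈ T → (R T ⟶ Y)
  hR : ∀ (T : Set (List A)) (Z : C) (f : ∀ t : List A, t ∈ T → (Z ⟶ Y)),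
    ∃! g : Z ⟶ R T, ∀ (t : List A) (ht : t ∈ T), g ≫ π T t ht = f t ht
  N : Set (List A) → Set (List A) → C
  e : ∀ Q T : Set (List A), P Q ⟶ N Q T
  m : ∀ Q T : Set (List A), N Q T ⟶ R T
  he : ∀ Q T : Set (List A), E (e Q T)
  hm : ∀ Q T : Set (List A), M (m Q T)
  hfact : ∀ (Q T : Set (List A)) (q : List A) (hq : q ∈ Q) (t : List A) (ht : t ∈ T),
    ι Q q hq ≫ e Q T ≫ m Q T ≫ π T t ht = ℓ (q ++ t)

namespace Setup

variable {A : Type} {C : Type*} [Category C] {E M : MorphismProperty C}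
  {X Y : C} {ℓ : List A → (X ⟶ Y)}

/-- `u` is the canonical morphism `u_{Q⊆Q',T} : N Q T ⟶ N Q' T`:
it satisfies `u ∘ e_{Q,T} = e_{Q',T} ∘ (canonical inclusion)` and
`m_{Q',T} ∘ u = m_{Q,T}`. -/
def IsU (S : Setup A E M X Y ℓ) {Q Q' : Set (List A)} (T : Set (List A))
    (h : Q ⊆ Q') (u : S.N Q T ⟶ S.N Q' T) : Prop :=
  (∀ (q : List A) (hq : q ∈ Q),
    S.ι Q q hq ≫ S.e Q T ≫ u = S.ι Q' q (h hq) ≫ S.e Q' T) ∧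
  u ≫ S.m Q' T = S.m Q T

/-- `v` is the canonical morphism `v_{Q,T⊆T'} : N Q T' ⟶ N Q T`:
it satisfies `v ∘ e_{Q,T'} = e_{Q,T}` and
`m_{Q,T} ∘ v = (canonical restriction) ∘ m_{Q,T'}`. -/
def IsV (S : Setup A E M X Y ℓ) {T T' : Set (List A)} (Q : Set (List A))
    (h : T ⊆ T') (v : S.N Q T' ⟶ S.N Q T) : Prop :=
  (S.e Q T' ≫ v = S.e Q T) ∧
  (∀ (t : List A) (ht : t ∈ T),
    v ≫ S.m Q T ≫ S.π T t ht = S.m Q T' ≫ S.π T' t (h ht))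

end Setup

/-
The morphisms `u` and `v` are the unique diagonals of the squares
`e_{Q,T} ≫ m_{Q,T} = (incl ≫ e_{Q',T}) ≫ m_{Q',T}` and
`e_{Q,T'} ≫ (m_{Q,T'} ≫ restr) = e_{Q,T} ≫ m_{Q,T}`, which commute because both sides have the
components `ℓ (q ++ t)`. Since `u ≫ m_{Q',T} = m_{Q,T}` and `e_{Q,T'} ≫ v = e_{Q,T}`, membership in
`M` resp. `E` follows from the cancellation properties of a factorization system, and the
composition laws from uniqueness of diagonals.
-/

namespace FactSys

variable {C : Type*} [Category C] {E M : MorphismProperty C}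

theorem hom_ext (fs : FactSys E M) {X Y Z W : C} {e : X ⟶ Y} {m : Z ⟶ W} (he : E e) (hm : M m)
    {d d' : Y ⟶ Z} (h₁ : e ≫ d = e ≫ d') (h₂ : d ≫ m = d' ≫ m) : d = d' :=
  (fs.diag e m (e ≫ d') (d' ≫ m) he hm (Category.assoc _ _ _).symm).unique ⟨h₁, h₂⟩ ⟨rfl, rfl⟩

theorem M_of_postcomp (fs : FactSys E M) {X Y Z : C} {f : X ⟶ Y} {g : Y ⟶ Z}
    (hg : M g) (hfg : M (f ≫ g)) : M f := by
  obtain ⟨W, e, m, he, hm, rfl⟩ := fs.fact f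
  obtain ⟨d, ⟨hed, hdm⟩, -⟩ := fs.diag e ((e ≫ m) ≫ g) (𝟙 X) (m ≫ g) he hfg
    (by simp)
  have hdf : d ≫ e ≫ m = m :=
    fs.hom_ext he hg (by simp [reassoc_of% hed]) (by simpa using hdm)
  have hde : d ≫ e = 𝟙 W :=
    fs.hom_ext he hm (by simp [reassoc_of% hed]) (by simpa using hdf)
  exact fs.M_comp e m (fs.M_iso e ⟨d, hed, hde⟩) hm

theorem E_of_precomp (fs : FactSys E M) {X Y Z : C} {f : X ⟶ Y} {g : Y ⟶ Z}
    (hf : E f) (hfg : E (f ≫ g)) : E g := by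
  obtain ⟨W, e, m, he, hm, rfl⟩ := fs.fact g
  obtain ⟨d, ⟨hd, hmd⟩, -⟩ := fs.diag (f ≫ e ≫ m) m (f ≫ e) (𝟙 Z) hfg hm (by simp)
  have hgd : e ≫ m ≫ d = e :=
    fs.hom_ext hf hm (by simpa using hd) (by simp [hmd])
  have hmd' : m ≫ d = 𝟙 W :=
    fs.hom_ext (fs.E_comp f e hf he) hm (by simp [hgd]) (by simp [hmd])
  exact fs.E_comp e m he (fs.E_iso m ⟨d, hmd', hmd⟩)

end FactSys

namespace Setup

variable {A : Type} {C : Type*} [Category C] {E M : MorphismProperty C}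
  {X Y : C} {ℓ : List A → (X ⟶ Y)} (S : Setup A E M X Y ℓ)

theorem P_hom_ext {Q : Set (List A)} {Z : C} {f g : S.P Q ⟶ Z}
    (h : ∀ q (hq : q ∈ Q), S.ι Q q hq ≫ f = S.ι Q q hq ≫ g) : f = g :=
  (S.hP Q Z fun q hq => S.ι Q q hq ≫ f).unique (fun _ _ => rfl) fun q hq => (h q hq).symm

theorem R_hom_ext {T : Set (List A)} {Z : C} {f g : Z ⟶ S.R T}
    (h : ∀ t (ht : t ∈ T), f ≫ S.π T t ht = g ≫ S.π T t ht) : f = g :=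
  (S.hR T Z fun t ht => f ≫ S.π T t ht).unique (fun _ _ => rfl) fun t ht => (h t ht).symm

variable {S}

theorem IsU.unique (fs : FactSys E M) {Q Q' T : Set (List A)} {h : Q ⊆ Q'}
    {u u' : S.N Q T ⟶ S.N Q' T} (hu : S.IsU T h u) (hu' : S.IsU T h u') : u = u' :=
  fs.hom_ext (S.he Q T) (S.hm Q' T)
    (S.P_hom_ext fun q hq => by rw [hu.1 q hq, hu'.1 q hq]) (hu.2.trans hu'.2.symm)

theorem IsV.unique (fs : FactSys E M) {Q T T' : Set (List A)} {h : T ⊆ T'}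
    {v v' : S.N Q T' ⟶ S.N Q T} (hv : S.IsV Q h v) (hv' : S.IsV Q h v') : v = v' :=
  fs.hom_ext (S.he Q T') (S.hm Q T) (hv.1.trans hv'.1.symm)
    (S.R_hom_ext fun t ht => by simp only [Category.assoc, hv.2 t ht, hv'.2 t ht])

theorem IsU.mem_M (fs : FactSys E M) {Q Q' T : Set (List A)} {h : Q ⊆ Q'}
    {u : S.N Q T ⟶ S.N Q' T} (hu : S.IsU T h u) : M u :=
  fs.M_of_postcomp (S.hm Q' T) (hu.2 ▸ S.hm Q T)

theorem IsV.mem_E (fs : FactSys E M) {Q T T' : Set (List A)} {h : T ⊆ T'}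
    {v : S.N Q T' ⟶ S.N Q T} (hv : S.IsV Q h v) : E v :=
  fs.E_of_precomp (S.he Q T') (hv.1 ▸ S.he Q T)

theorem IsU.comp {Q Q' Q'' T : Set (List A)} {h₁ : Q ⊆ Q'} {h₂ : Q' ⊆ Q''}
    {u₁ : S.N Q T ⟶ S.N Q' T} {u₂ : S.N Q' T ⟶ S.N Q'' T}
    (hu₁ : S.IsU T h₁ u₁) (hu₂ : S.IsU T h₂ u₂) : S.IsU T (h₁.trans h₂) (u₁ ≫ u₂) :=
  ⟨fun q hq => by rw [reassoc_of% hu₁.1 q hq, hu₂.1 q (h₁ hq)],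
    by rw [Category.assoc, hu₂.2, hu₁.2]⟩

theorem IsV.comp {Q T T' T'' : Set (List A)} {h₁ : T ⊆ T'} {h₂ : T' ⊆ T''}
    {v₁ : S.N Q T' ⟶ S.N Q T} {v₂ : S.N Q T'' ⟶ S.N Q T'}
    (hv₁ : S.IsV Q h₁ v₁) (hv₂ : S.IsV Q h₂ v₂) : S.IsV Q (h₁.trans h₂) (v₂ ≫ v₁) :=
  ⟨by rw [reassoc_of% hv₂.1, hv₁.1],
    fun t ht => by rw [Category.assoc, hv₁.2 t ht, hv₂.2 t (h₁ ht)]⟩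

theorem exists_isU (fs : FactSys E M) {Q Q' : Set (List A)} (T : Set (List A)) (h : Q ⊆ Q') :
    ∃ u, S.IsU T h u := by
  obtain ⟨incl, hincl, -⟩ := S.hP Q (S.P Q') fun q hq => S.ι Q' q (h hq)
  have hsq : S.e Q T ≫ S.m Q T = (incl ≫ S.e Q' T) ≫ S.m Q' T :=
    S.P_hom_ext fun q hq => S.R_hom_ext fun t ht => by
      simp only [Category.assoc, S.hfact, reassoc_of% hincl q hq]
  obtain ⟨u, ⟨heu, hum⟩, -⟩ := fs.diag _ _ _ _ (S.he Q T) (S.hm Q' T) hsq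
  exact ⟨u, fun q hq => by rw [heu, reassoc_of% hincl q hq], hum⟩

theorem exists_isV (fs : FactSys E M) {T T' : Set (List A)} (Q : Set (List A)) (h : T ⊆ T') :
    ∃ v, S.IsV Q h v := by
  obtain ⟨restr, hrestr, -⟩ := S.hR T (S.R T') fun t ht => S.π T' t (h ht)
  have hsq : S.e Q T' ≫ S.m Q T' ≫ restr = S.e Q T ≫ S.m Q T :=
    S.P_hom_ext fun q hq => S.R_hom_ext fun t ht => by
      simp only [Category.assoc, hrestr, S.hfact]
  obtain ⟨v, ⟨hev, hvm⟩, -⟩ := fs.diag _ _ _ _ (S.he Q T') (S.hm Q T) hsq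
  exact ⟨v, hev, fun t ht => by rw [reassoc_of% hvm, hrestr]⟩

theorem existsUnique_isU (fs : FactSys E M) {Q Q' : Set (List A)} (T : Set (List A))
    (h : Q ⊆ Q') : ∃! u, S.IsU T h u :=
  let ⟨u, hu⟩ := S.exists_isU fs T h
  ⟨u, hu, fun _ hu' => hu'.unique fs hu⟩

theorem existsUnique_isV (fs : FactSys E M) {T T' : Set (List A)} (Q : Set (List A))
    (h : T ⊆ T') : ∃! v, S.IsV Q h v :=
  let ⟨v, hv⟩ := S.exists_isV fs Q h
  ⟨v, hv, fun _ hv' => hv'.unique fs hv⟩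

end Setup

theorem stmt13_general {A : Type} {C : Type*} [Category C]
    (E M : MorphismProperty C) (fs : FactSys E M) {X Y : C}
    (ℓ : List A → (X ⟶ Y)) (S : Setup A E M X Y ℓ) :
    (∀ (Q Q' T : Set (List A)) (h : Q ⊆ Q'),
      (∃! u : S.N Q T ⟶ S.N Q' T, S.IsU T h u) ∧
      (∀ u : S.N Q T ⟶ S.N Q' T, S.IsU T h u → M u)) ∧
    (∀ (Q T T' : Set (List A)) (h : T ⊆ T'),
      (∃! v : S.N Q T' ⟶ S.N Q T, S.IsV Q h v) ∧
      (∀ v : S.N Q T' ⟶ S.N Q T, S.IsV Q h v → E v)) ∧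
    (∀ (Q Q' Q'' T : Set (List A)) (h1 : Q ⊆ Q') (h2 : Q' ⊆ Q'')
        (u1 : S.N Q T ⟶ S.N Q' T) (u2 : S.N Q' T ⟶ S.N Q'' T)
        (u3 : S.N Q T ⟶ S.N Q'' T),
      S.IsU T h1 u1 → S.IsU T h2 u2 → S.IsU T (h1.trans h2) u3 →
      u1 ≫ u2 = u3) ∧
    (∀ (Q T T' T'' : Set (List A)) (h1 : T ⊆ T') (h2 : T' ⊆ T'')
        (v1 : S.N Q T' ⟶ S.N Q T) (v2 : S.N Q T'' ⟶ S.N Q T')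
        (v3 : S.N Q T'' ⟶ S.N Q T),
      S.IsV Q h1 v1 → S.IsV Q h2 v2 → S.IsV Q (h1.trans h2) v3 →
      v2 ≫ v1 = v3) := by
  exact ⟨fun _ _ T h => ⟨S.existsUnique_isU fs T h, fun _ hu => Setup.IsU.mem_M fs hu⟩,
    fun Q _ _ h => ⟨S.existsUnique_isV fs Q h, fun _ hv => Setup.IsV.mem_E fs hv⟩,
    fun _ _ _ _ _ _ _ _ _ hu₁ hu₂ hu₃ => (hu₁.comp hu₂).unique fs hu₃,
    fun _ _ _ _ _ _ _ _ _ hv₁ hv₂ hv₃ => (hv₁.comp hv₂).unique fs hv₃⟩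

/-- existence, uniqueness, `E`/`M`-membership and functoriality of the
canonical morphisms `u_{Q⊆Q',T}` and `v_{Q,T⊆T'}` between the factorizations `N Q T`. -/
theorem stmt13 {A : Type} [Fintype A] {C : Type*} [Category C]
    (E M : MorphismProperty C) (fs : FactSys E M) {X Y : C}
    (ℓ : List A → (X ⟶ Y)) (S : Setup A E M X Y ℓ) :
    (∀ (Q Q' T : Set (List A)) (h : Q ⊆ Q'),
      (∃! u : S.N Q T ⟶ S.N Q' T, S.IsU T h u) ∧
      (∀ u : S.N Q T ⟶ S.N Q' T, S.IsU T h u → M u)) ∧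
    (∀ (Q T T' : Set (List A)) (h : T ⊆ T'),
      (∃! v : S.N Q T' ⟶ S.N Q T, S.IsV Q h v) ∧
      (∀ v : S.N Q T' ⟶ S.N Q T, S.IsV Q h v → E v)) ∧
    (∀ (Q Q' Q'' T : Set (List A)) (h1 : Q ⊆ Q') (h2 : Q' ⊆ Q'')
        (u1 : S.N Q T ⟶ S.N Q' T) (u2 : S.N Q' T ⟶ S.N Q'' T)
        (u3 : S.N Q T ⟶ S.N Q'' T),
      S.IsU T h1 u1 → S.IsU T h2 u2 → S.IsU T (h1.trans h2) u3 →
      u1 ≫ u2 = u3) ∧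
    (∀ (Q T T' T'' : Set (List A)) (h1 : T ⊆ T') (h2 : T' ⊆ T'')
        (v1 : S.N Q T' ⟶ S.N Q T) (v2 : S.N Q T'' ⟶ S.N Q T')
        (v3 : S.N Q T'' ⟶ S.N Q T),
      S.IsV Q h1 v1 → S.IsV Q h2 v2 → S.IsV Q (h1.trans h2) v3 →
      v2 ≫ v1 = v3) :=
  stmt13_general E M fs ℓ S
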